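/- Let G = (V,E,e) be a connected finite simple rooted graph, let k ≥ 1 be such that the distance k-graph G^{[k]} is non-trivial, and let N ≥ 2. Then the distance k-graph (G^{⋆N})^{[k]} of the N-fold star power decomposes as follows: two vertices x, y of G^{⋆N} are adjacent in (G^{⋆N})^{[k]} if and only if either (i) x and y lie in the same copy G_i of G and ∂_G(x,y) = k (i.e., x ~ y in the copy of G^{[k]} corresponding to G_i, so (G^{[k]})^{⋆N} ⊆ (G^{⋆N})^{[k]}), or (ii) x ∈ G_i and y ∈ G_j with i ≠ j and ∂_G(x,e) + ∂_G(y,e) = k; in case (ii), since ∂_G(x,e) > 0 and ∂_G(y,e) > 0, both endpoints satisfy ∂_G(x,e) < k and ∂_G(y,e) < k. -/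

import Mathlib

open MeasureTheory Filter
open scoped ENNReal Topology

noncomputable section

/-- The distance `k`-graph of a graph: same vertices, edges between vertices at distance `k`. -/
def distGraph {W : Type*} (H : SimpleGraph W) (k : ℕ) : SimpleGraph W where
  Adj x y := x ≠ y ∧ H.dist x y = k
  symm := ⟨fun x y h => ⟨h.1.symm, by rw [SimpleGraph.dist_comm]; exact h.2⟩⟩
  loopless := ⟨fun x h => h.1 rfl⟩

/-- Vertex set of the `N`-fold star power of a graph rooted at `e`:
the common root `none`, plus `N` copies of the non-root vertices. -/
abbrev StarVert (V : Type*) (e : V) (N : ℕ) := Option (Fin N × {v : V // v ≠ e})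

def starAdj {V : Type*} (G : SimpleGraph V) (e : V) (N : ℕ) :
    StarVert V e N → StarVert V e N → Prop
  | none, none => False
  | none, some q => G.Adj e q.2.1
  | some p, none => G.Adj p.2.1 e
  | some p, some q => p.1 = q.1 ∧ G.Adj p.2.1 q.2.1

/-- The `N`-fold star power of a rooted graph `(G, e)`: `N` copies of `G` glued at `e`. -/
def starPower {V : Type*} (G : SimpleGraph V) (e : V) (N : ℕ) :
    SimpleGraph (StarVert V e N) where
  Adj := starAdj G e N
  symm := by
    constructor
    rintro (_ | p) (_ | q) h
    · exact h.elim
    · exact h.symm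
    · exact h.symm
    · exact ⟨h.1.symm, h.2.symm⟩
  loopless := by
    constructor
    rintro (_ | p) h
    · exact h.elim
    · exact G.irrefl h.2

/-- The vertex of the `i`-th copy of `G` in the `N`-fold star power corresponding to `v ∈ G`. -/
def rootedEmbed {V : Type*} [DecidableEq V] (e : V) (N : ℕ) (i : Fin N) (v : V) :
    StarVert V e N :=
  if h : v = e then none else some (i, ⟨v, h⟩)

open scoped Classical in
/-- The real adjacency matrix of a graph. -/
def adjMat {W : Type*} [Fintype W] (H : SimpleGraph W) : Matrix W W ℝ :=
  fun x y => if H.Adj x y then 1 else 0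

/-- The centered Bernoulli distribution `(1/2)δ_{-1} + (1/2)δ_1`. -/
def bern : Measure ℝ := (1/2 : ℝ≥0∞) • Measure.dirac (-1) + (1/2 : ℝ≥0∞) • Measure.dirac 1

/-- The Cauchy transform of a measure on `ℝ`. -/
def cauchyT (μ : Measure ℝ) (z : ℂ) : ℂ := ∫ x, (z - (x : ℂ))⁻¹ ∂μ

/-- The distance `d(μ₁,μ₂) = sup_{Im z ≥ 1} |G_{μ₁}(z) - G_{μ₂}(z)|`. -/
def cdist (μ₁ μ₂ : Measure ℝ) : ℝ :=
  ⨆ z : {z : ℂ // 1 ≤ z.im}, ‖cauchyT μ₁ z - cauchyT μ₂ z‖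


/-!
A walk in the star power that avoids the root stays inside one copy, so the root is a cut
vertex separating the copies. Projecting onto a copy (collapsing every other copy to the root)
maps edges to edges or loops and hence cannot shorten walks; therefore each copy is isometrically
embedded, and the distance between vertices `x`, `y` in distinct copies is
`∂_G(x, e) + ∂_G(y, e)`. Both alternatives of the theorem are these two distance formulas.
-/

namespace SimpleGraph

section Contraction

variable {A B : Type*} {H : SimpleGraph A} {H' : SimpleGraph B} {f : A → B}

theorem Walk.exists_length_le_of_eq_or_adj
    (hf : ∀ a b, H.Adj a b → f a = f b ∨ H'.Adj (f a) (f b)) {u w : A} (p : H.Walk u w) :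
    ∃ q : H'.Walk (f u) (f w), q.length ≤ p.length := by
  induction p with
  | nil => exact ⟨Walk.nil, le_rfl⟩
  | cons h p ih =>
    obtain ⟨q, hq⟩ := ih
    rcases hf _ _ h with h' | h'
    · exact ⟨q.copy h'.symm rfl, by simp only [Walk.length_copy, Walk.length_cons]; omega⟩
    · exact ⟨Walk.cons h' q, by simp only [Walk.length_cons]; omega⟩

theorem Reachable.dist_le_of_eq_or_adj
    (hf : ∀ a b, H.Adj a b → f a = f b ∨ H'.Adj (f a) (f b)) {u w : A}
    (hr : H.Reachable u w) :
    H'.dist (f u) (f w) ≤ H.dist u w := by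
  obtain ⟨p, hp⟩ := hr.exists_walk_length_eq_dist
  obtain ⟨q, hq⟩ := p.exists_length_le_of_eq_or_adj hf
  exact (dist_le q).trans (hp ▸ hq)

end Contraction

theorem dist_eq_add_of_forall_mem_support {V : Type*} [DecidableEq V] {G : SimpleGraph V}
    {u v w : V} (hr : G.Reachable u w) (hv : ∀ p : G.Walk u w, v ∈ p.support) :
    G.dist u w = G.dist u v + G.dist v w := by
  obtain ⟨p, hp⟩ := hr.exists_walk_length_eq_dist
  refine le_antisymm (Reachable.dist_triangle_left ⟨p.takeUntil v (hv p)⟩ w) ?_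
  have hsplit := congrArg Walk.length (p.take_spec (hv p))
  rw [Walk.length_append] at hsplit
  have := dist_le (p.takeUntil v (hv p))
  have := dist_le (p.dropUntil v (hv p))
  omega

end SimpleGraph

open SimpleGraph

section StarPower

variable {V : Type*} {G : SimpleGraph V} {e : V} {N : ℕ}

theorem starPower_walk_map_fst_eq {u v : StarVert V e N} (p : (starPower G e N).Walk u v)
    (hp : none ∉ p.support) : u.map Prod.fst = v.map Prod.fst := by
  induction p with
  | nil => rfl
  | @cons a c b h p ih =>
    rw [Walk.support_cons, List.mem_cons, not_or] at hp
    rw [← ih hp.2]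
    obtain ⟨a, rfl⟩ := Option.ne_none_iff_exists'.mp (Ne.symm hp.1)
    obtain ⟨c, rfl⟩ := Option.ne_none_iff_exists'.mp fun hc => hp.2 (hc ▸ p.start_mem_support)
    exact congrArg some h.1

theorem starPower_none_mem_support {a b : Fin N × {v : V // v ≠ e}} (hab : a.1 ≠ b.1)
    (p : (starPower G e N).Walk (some a) (some b)) : none ∈ p.support := by
  by_contra hp
  exact hab (Option.some_injective _ (starPower_walk_map_fst_eq p hp))

def starProj (e : V) (N : ℕ) (i : Fin N) : StarVert V e N → V :=
  fun a => a.elim e fun p => if p.1 = i then p.2.1 else e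

theorem starProj_eq_or_adj (i : Fin N) (a b : StarVert V e N) (h : (starPower G e N).Adj a b) :
    starProj e N i a = starProj e N i b ∨ G.Adj (starProj e N i a) (starProj e N i b) := by
  rcases a with _ | ⟨j, x, hx⟩ <;> rcases b with _ | ⟨j', y, hy⟩ <;>
    simp only [starPower, starAdj] at h <;> simp only [starProj, Option.elim] <;> grind

variable [DecidableEq V]

@[simp]
theorem rootedEmbed_self (i : Fin N) : rootedEmbed e N i e = none := dif_pos rfl

theorem rootedEmbed_of_ne (i : Fin N) {x : V} (hx : x ≠ e) :
    rootedEmbed e N i x = some (i, ⟨x, hx⟩) := dif_neg hx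

@[simp]
theorem starProj_rootedEmbed (i : Fin N) (x : V) : starProj e N i (rootedEmbed e N i x) = x := by
  by_cases hx : x = e
  · simp [hx, starProj]
  · simp [rootedEmbed_of_ne i hx, starProj]

theorem rootedEmbed_injective (i : Fin N) : Function.Injective (rootedEmbed e N i) :=
  Function.LeftInverse.injective (starProj_rootedEmbed i)

variable (G) in
@[simps]
def rootedEmbedHom (e : V) (N : ℕ) (i : Fin N) : G →g starPower G e N where
  toFun := rootedEmbed e N i
  map_rel' {x y} h := by
    unfold rootedEmbed
    split_ifs <;> simp_all [starPower, starAdj]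

theorem exists_rootedEmbed_eq_of_ne {u w : StarVert V e N} (huw : u ≠ w) :
    (∃ i x y, u = rootedEmbed e N i x ∧ w = rootedEmbed e N i y) ∨
      ∃ i j x y, i ≠ j ∧ x ≠ e ∧ y ≠ e ∧
        u = rootedEmbed e N i x ∧ w = rootedEmbed e N j y := by
  rcases u with _ | ⟨i, x, hx⟩ <;> rcases w with _ | ⟨j, y, hy⟩
  · exact absurd rfl huw
  · exact .inl ⟨j, e, y, (rootedEmbed_self j).symm, (rootedEmbed_of_ne j hy).symm⟩
  · exact .inl ⟨i, x, e, (rootedEmbed_of_ne i hx).symm, (rootedEmbed_self i).symm⟩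
  · by_cases hij : i = j
    · subst hij
      exact .inl ⟨i, x, y, (rootedEmbed_of_ne i hx).symm, (rootedEmbed_of_ne i hy).symm⟩
    · exact .inr ⟨i, j, x, y, hij, hx, hy, (rootedEmbed_of_ne i hx).symm,
        (rootedEmbed_of_ne j hy).symm⟩

variable (hconn : G.Connected)
include hconn

theorem dist_rootedEmbed (i : Fin N) (x y : V) :
    (starPower G e N).dist (rootedEmbed e N i x) (rootedEmbed e N i y) = G.dist x y := by
  refine le_antisymm ((hconn x y).dist_le_of_eq_or_adj fun _ _ h =>
    .inr ((rootedEmbedHom G e N i).map_adj h)) ?_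
  simpa using
    ((hconn x y).map (rootedEmbedHom G e N i)).dist_le_of_eq_or_adj (starProj_eq_or_adj i)

theorem reachable_rootedEmbed (i j : Fin N) (x y : V) :
    (starPower G e N).Reachable (rootedEmbed e N i x) (rootedEmbed e N j y) := by
  have hx := (hconn x e).map (rootedEmbedHom G e N i)
  have hy := (hconn e y).map (rootedEmbedHom G e N j)
  simp only [rootedEmbedHom_apply, rootedEmbed_self] at hx hy
  exact hx.trans hy

theorem dist_rootedEmbed_of_ne {i j : Fin N} (hij : i ≠ j) {x y : V} (hx : x ≠ e)
    (hy : y ≠ e) :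
    (starPower G e N).dist (rootedEmbed e N i x) (rootedEmbed e N j y) =
      G.dist x e + G.dist y e := by
  have hroot : rootedEmbed e N i e = rootedEmbed e N j e := by simp only [rootedEmbed_self]
  rw [dist_eq_add_of_forall_mem_support (v := rootedEmbed e N i e)
    (reachable_rootedEmbed hconn i j x y), dist_rootedEmbed hconn, hroot, dist_rootedEmbed hconn,
    G.dist_comm (u := e)]
  intro p
  simpa using starPower_none_mem_support (a := (i, ⟨x, hx⟩)) (b := (j, ⟨y, hy⟩)) hij
    (p.copy (rootedEmbed_of_ne i hx) (rootedEmbed_of_ne j hy))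

theorem distGraph_adj_rootedEmbed_iff {k : ℕ} (i : Fin N) {x y : V} :
    (distGraph (starPower G e N) k).Adj (rootedEmbed e N i x) (rootedEmbed e N i y) ↔
      (distGraph G k).Adj x y :=
  and_congr (rootedEmbed_injective i).ne_iff (by rw [dist_rootedEmbed hconn])

theorem distGraph_adj_rootedEmbed_iff_of_ne {k : ℕ} {i j : Fin N} (hij : i ≠ j) {x y : V}
    (hx : x ≠ e) (hy : y ≠ e) :
    (distGraph (starPower G e N) k).Adj (rootedEmbed e N i x) (rootedEmbed e N j y) ↔
      G.dist x e + G.dist y e = k := by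
  have hne : rootedEmbed e N i x ≠ rootedEmbed e N j y := by
    simp [rootedEmbed_of_ne _ hx, rootedEmbed_of_ne _ hy, hij]
  exact (and_iff_right hne).trans (by rw [dist_rootedEmbed_of_ne hconn hij hx hy])

end StarPower

theorem star_power_distance_k_graph_decomposition_general
    {V : Type*} [DecidableEq V] (G : SimpleGraph V) (e : V)
    (hconn : G.Connected) (k : ℕ)
    (N : ℕ) (u w : StarVert V e N) :
    (distGraph (starPower G e N) k).Adj u w ↔
      ((∃ i : Fin N, ∃ x y : V,
          u = rootedEmbed e N i x ∧ w = rootedEmbed e N i y ∧ (distGraph G k).Adj x y) ∨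
       (∃ i j : Fin N, ∃ x y : V, i ≠ j ∧ x ≠ e ∧ y ≠ e ∧
          u = rootedEmbed e N i x ∧ w = rootedEmbed e N j y ∧
          G.dist x e + G.dist y e = k ∧ G.dist x e < k ∧ G.dist y e < k)) := by
  constructor
  · intro huw
    rcases exists_rootedEmbed_eq_of_ne huw.ne with
      ⟨i, x, y, rfl, rfl⟩ | ⟨i, j, x, y, hij, hx, hy, rfl, rfl⟩
    · exact .inl ⟨i, x, y, rfl, rfl, (distGraph_adj_rootedEmbed_iff hconn i).1 huw⟩
    · have hsum := (distGraph_adj_rootedEmbed_iff_of_ne hconn hij hx hy).1 huw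
      have hxe := hconn.pos_dist_of_ne hx
      have hye := hconn.pos_dist_of_ne hy
      exact .inr ⟨i, j, x, y, hij, hx, hy, rfl, rfl, hsum, by omega, by omega⟩
  · rintro (⟨i, x, y, rfl, rfl, hxy⟩ | ⟨i, j, x, y, hij, hx, hy, rfl, rfl, hsum, -, -⟩)
    · exact (distGraph_adj_rootedEmbed_iff hconn i).2 hxy
    · exact (distGraph_adj_rootedEmbed_iff_of_ne hconn hij hx hy).2 hsum

/-- Decomposition of the distance `k`-graph of the `N`-fold star power:
two vertices are adjacent iff they lie in the same copy at `G`-distance `k` (the part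
`(G^{[k]})^{⋆N}`), or they lie in distinct copies with distances to the root summing to `k`,
in which case both distances to the root are strictly less than `k`. -/
theorem star_power_distance_k_graph_decomposition
    {V : Type*} [Fintype V] [DecidableEq V] (G : SimpleGraph V) (e : V)
    (hconn : G.Connected) (k : ℕ) (hk : 1 ≤ k)
    (hnontrivial : ∃ x y : V, (distGraph G k).Adj x y)
    (N : ℕ) (hN : 2 ≤ N) (u w : StarVert V e N) :
    (distGraph (starPower G e N) k).Adj u w ↔
      ((∃ i : Fin N, ∃ x y : V,
          u = rootedEmbed e N i x ∧ w = rootedEmbed e N i y ∧ (distGraph G k).Adj x y) ∨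
       (∃ i j : Fin N, ∃ x y : V, i ≠ j ∧ x ≠ e ∧ y ≠ e ∧
          u = rootedEmbed e N i x ∧ w = rootedEmbed e N j y ∧
          G.dist x e + G.dist y e = k ∧ G.dist x e < k ∧ G.dist y e < k)) :=
  star_power_distance_k_graph_decomposition_general G e hconn k N u w
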